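/- arXiv:nlin/0402038 — 3 statements merged into one kernel-verified Lean document; each statement's English description precedes it below -/
import Mathlib

section
/- Let N : ℝ² → ℝ³ be twice continuously differentiable, let A, S, B : ℝ² → ℝ be continuously differentiable and F : ℝ² → ℝ be such that (A·N_x)_x + (S·N_y)_x + (B·N_y)_y + (S·N_x)_y = F·N at every point of ℝ². Then the ℝ³-valued 1-form with components (A·(N×N_x) + S·(N×N_y)) and (S·(N×N_x) + B·(N×N_y)) is divergence free: ∂_x( A·(N×N_x) + S·(N×N_y) ) + ∂_y( S·(N×N_x) + B·(N×N_y) ) = 0 at every point. -/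
open Matrix

/-- Partial derivative with respect to the first coordinate. -/
noncomputable def pdx (f : ℝ × ℝ → (Fin 3 → ℝ)) (p : ℝ × ℝ) : Fin 3 → ℝ :=
  fderiv ℝ f p (1, 0)

/-- Partial derivative with respect to the second coordinate. -/
noncomputable def pdy (f : ℝ × ℝ → (Fin 3 → ℝ)) (p : ℝ × ℝ) : Fin 3 → ℝ :=
  fderiv ℝ f p (0, 1)

/-! Both components of the 1-form are `N × P` and `N × Q` with `P = A N_x + S N_y` and
`Q = S N_x + B N_y`. By the Leibniz rule the divergence is
`N_x × P + N_y × Q + N × (P_x + Q_y)`. The PDE says `P_x + Q_y = F N`, so the last term vanishes,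
and the first two sum to `S (N_x × N_y + N_y × N_x) = 0` because the coefficient matrix
`[[A, S], [S, B]]` is symmetric. -/

theorem fderiv_cross_apply {𝕜 E : Type*} [NontriviallyNormedField 𝕜] [CompleteSpace 𝕜]
    [NormedAddCommGroup E] [NormedSpace 𝕜 E] {f g : E → Fin 3 → 𝕜} {x : E}
    (hf : DifferentiableAt 𝕜 f x) (hg : DifferentiableAt 𝕜 g x) (v : E) :
    fderiv 𝕜 (fun y => f y ⨯₃ g y) x v = fderiv 𝕜 f x v ⨯₃ g x + f x ⨯₃ fderiv 𝕜 g x v := by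
  have h := (crossProduct (R := 𝕜)).toContinuousBilinearMap.fderiv_of_bilinear hf hg
  simp only [LinearMap.toContinuousBilinearMap_apply] at h
  simp [h, add_comm]

theorem contDiff_pdx {n : WithTop ℕ∞} {f : ℝ × ℝ → Fin 3 → ℝ} (hf : ContDiff ℝ (n + 1) f) :
    ContDiff ℝ n (pdx f) :=
  (hf.fderiv_right le_rfl).clm_apply contDiff_const

theorem contDiff_pdy {n : WithTop ℕ∞} {f : ℝ × ℝ → Fin 3 → ℝ} (hf : ContDiff ℝ (n + 1) f) :
    ContDiff ℝ n (pdy f) :=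
  (hf.fderiv_right le_rfl).clm_apply contDiff_const

theorem pdx_add {f g : ℝ × ℝ → Fin 3 → ℝ} {p : ℝ × ℝ}
    (hf : DifferentiableAt ℝ f p) (hg : DifferentiableAt ℝ g p) :
    pdx (fun q => f q + g q) p = pdx f p + pdx g p := by
  simp only [pdx, fderiv_fun_add hf hg, _root_.add_apply]

theorem pdy_add {f g : ℝ × ℝ → Fin 3 → ℝ} {p : ℝ × ℝ}
    (hf : DifferentiableAt ℝ f p) (hg : DifferentiableAt ℝ g p) :
    pdy (fun q => f q + g q) p = pdy f p + pdy g p := by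
  simp only [pdy, fderiv_fun_add hf hg, _root_.add_apply]

theorem pdx_add_pdy_cross {N P Q : ℝ × ℝ → Fin 3 → ℝ} {p : ℝ × ℝ}
    (hN : DifferentiableAt ℝ N p) (hP : DifferentiableAt ℝ P p) (hQ : DifferentiableAt ℝ Q p) :
    pdx (fun q => N q ⨯₃ P q) p + pdy (fun q => N q ⨯₃ Q q) p
      = pdx N p ⨯₃ P p + pdy N p ⨯₃ Q p + N p ⨯₃ (pdx P p + pdy Q p) := by
  simp only [pdx, pdy, fderiv_cross_apply hN hP, fderiv_cross_apply hN hQ, map_add]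
  abel

theorem cross_add_cross_symm_eq_zero {R : Type*} [CommRing R] (u v : Fin 3 → R) (a s b : R) :
    u ⨯₃ (a • u + s • v) + v ⨯₃ (s • u + b • v) = 0 := by
  simp only [map_add, map_smul, cross_self, smul_zero, zero_add, add_zero, ← smul_add,
    cross_anticomm']

/-- If `N` satisfies the self-adjoint PDE
`(A N_x)_x + (S N_y)_x + (B N_y)_y + (S N_x)_y = F N`, then the `ℝ³`-valued 1-form
with components `A (N×N_x) + S (N×N_y)` and `S (N×N_x) + B (N×N_y)` is
divergence free. -/
theorem divergence_free_one_form
    (N : ℝ × ℝ → (Fin 3 → ℝ)) (A S B F : ℝ × ℝ → ℝ)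
    (hN : ContDiff ℝ 2 N)
    (hA : ContDiff ℝ 1 A) (hS : ContDiff ℝ 1 S) (hB : ContDiff ℝ 1 B)
    (heq : ∀ p,
      pdx (fun q => A q • pdx N q) p + pdx (fun q => S q • pdy N q) p
        + pdy (fun q => B q • pdy N q) p + pdy (fun q => S q • pdx N q) p
      = F p • N p) :
    ∀ p,
      pdx (fun q => A q • (N q ⨯₃ pdx N q) + S q • (N q ⨯₃ pdy N q)) p
        + pdy (fun q => S q • (N q ⨯₃ pdx N q) + B q • (N q ⨯₃ pdy N q)) p = 0 := by
  intro p
  have hNx : ContDiff ℝ 1 (pdx N) := contDiff_pdx hN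
  have hNy : ContDiff ℝ 1 (pdy N) := contDiff_pdy hN
  have hd {f : ℝ × ℝ → Fin 3 → ℝ} (hf : ContDiff ℝ 1 f) : DifferentiableAt ℝ f p :=
    hf.differentiable one_ne_zero p
  have hP : DifferentiableAt ℝ (fun q => A q • pdx N q + S q • pdy N q) p :=
    hd ((hA.smul hNx).add (hS.smul hNy))
  have hQ : DifferentiableAt ℝ (fun q => S q • pdx N q + B q • pdy N q) p :=
    hd ((hS.smul hNx).add (hB.smul hNy))
  have hP_x : pdx (fun q => A q • pdx N q + S q • pdy N q) p
      = pdx (fun q => A q • pdx N q) p + pdx (fun q => S q • pdy N q) p :=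
    pdx_add (hd (hA.smul hNx)) (hd (hS.smul hNy))
  have hQ_y : pdy (fun q => S q • pdx N q + B q • pdy N q) p
      = pdy (fun q => S q • pdx N q) p + pdy (fun q => B q • pdy N q) p :=
    pdy_add (hd (hS.smul hNx)) (hd (hB.smul hNy))
  simp only [← map_smul, ← map_add]
  rw [pdx_add_pdy_cross (hN.differentiable (by norm_num) p) hP hQ, hP_x, hQ_y, ← add_assoc,
    add_right_comm _ _ (pdy _ p), heq p, map_smul, cross_self, smul_zero, add_zero]
  exact cross_add_cross_symm_eq_zero _ _ _ _ _
end

section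
/- Let r, n : ℤ² → ℝ³ with det(n(m,n), n(m+1,n), n(m,n+1)) ≠ 0 for all (m,n), and let a, b, s : ℤ² → ℝ satisfy the discrete Lelieuvre relations Δ_n r(m,n) = n(m,n) × ( a(m−1,n)·n(m−1,n) + s(m−1,n)·n(m−1,n+1) ) and Δ_m r(m,n) = −n(m,n) × ( b(m,n−1)·n(m,n−1) + s(m,n−1)·n(m+1,n−1) ) for all (m,n). Then there exists f : ℤ² → ℝ such that the self-adjoint 7-point scheme holds for the co-normal field: a(m,n)·n(m+1,n) + a(m−1,n)·n(m−1,n) + b(m,n)·n(m,n+1) + b(m,n−1)·n(m,n−1) + s(m−1,n)·n(m−1,n+1) + s(m,n−1)·n(m+1,n−1) = f(m,n)·n(m,n) for all (m,n). -/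
open Matrix

/-- Determinant of the 3×3 matrix with rows `u`, `v`, `w`. -/
noncomputable def det3 (u v w : Fin 3 → ℝ) : ℝ :=
  (Matrix.of ![u, v, w]).det

/-!
Going once around the elementary quadrilateral `(m,k), (m+1,k), (m+1,k+1), (m,k+1)`, the four
increments of `r` given by the Lelieuvre relations sum to zero. Expanding the cross products, the
two terms in `s m k` cancel and what is left is `-(n m k ⨯₃ S)`, where `S` is the left-hand side
of the 7-point scheme at `(m,k)`. Nondegeneracy forces `n m k ≠ 0`, so `S` is a multiple of `n m k`.
-/

theorem exists_smul_eq_of_cross_eq_zero {F : Type*} [Field F] {u v : Fin 3 → F} (hu : u ≠ 0)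
    (h : u ⨯₃ v = 0) : ∃ c : F, v = c • u := by
  have hdep : ¬LinearIndependent F ![u, v] := by
    rw [← crossProduct_ne_zero_iff_linearIndependent, not_not, h]
  rw [LinearIndependent.pair_iff' hu] at hdep
  push Not at hdep
  obtain ⟨c, hc⟩ := hdep
  exact ⟨c, hc.symm⟩

theorem ne_zero_of_det3_ne_zero {u v w : Fin 3 → ℝ} (h : det3 u v w ≠ 0) : u ≠ 0 := by
  rintro rfl
  exact h (det_eq_zero_of_row_eq_zero (0 : Fin 3) fun _ ↦ rfl)

def sevenPointSum {R : Type*} [CommRing R] (n : ℤ → ℤ → (Fin 3 → R)) (a b s : ℤ → ℤ → R)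
    (m k : ℤ) : Fin 3 → R :=
  a m k • n (m + 1) k + a (m - 1) k • n (m - 1) k
    + b m k • n m (k + 1) + b m (k - 1) • n m (k - 1)
    + s (m - 1) k • n (m - 1) (k + 1) + s m (k - 1) • n (m + 1) (k - 1)

theorem cross_sevenPointSum_eq_zero {R : Type*} [CommRing R] (r n : ℤ → ℤ → (Fin 3 → R))
    (a b s : ℤ → ℤ → R)
    (hLel : ∀ m k : ℤ,
      r m (k + 1) - r m k
        = n m k ⨯₃ (a (m - 1) k • n (m - 1) k + s (m - 1) k • n (m - 1) (k + 1)) ∧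
      r (m + 1) k - r m k
        = -(n m k ⨯₃ (b m (k - 1) • n m (k - 1) + s m (k - 1) • n (m + 1) (k - 1))))
    (m k : ℤ) : n m k ⨯₃ sevenPointSum n a b s m k = 0 := by
  have hclosure : (r (m + 1) (k + 1) - r (m + 1) k) + (r (m + 1) k - r m k)
      - (r m (k + 1) - r m k) - (r (m + 1) (k + 1) - r m (k + 1)) = 0 := by abel
  have hright := (hLel (m + 1) k).1
  have htop := (hLel m (k + 1)).2
  rw [add_sub_cancel_right] at hright htop
  rw [hright, (hLel m k).2, (hLel m k).1, htop] at hclosure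
  ext i
  have hi := congrFun hclosure i
  fin_cases i <;>
  · simp only [sevenPointSum, cross_apply, Pi.add_apply, Pi.sub_apply, Pi.neg_apply,
      Pi.smul_apply, Pi.zero_apply, smul_eq_mul, Fin.zero_eta, Fin.mk_one, Fin.reduceFinMk,
      cons_val] at hi ⊢
    linear_combination -hi

/-- If the discrete Lelieuvre relations hold (with nondegeneracy
`det(n(m,k), n(m+1,k), n(m,k+1)) ≠ 0`), then the co-normal field `n` satisfies the
self-adjoint 7-point scheme for some `f`. -/
theorem lelieuvre_implies_7point
    (r n : ℤ → ℤ → (Fin 3 → ℝ)) (a b s : ℤ → ℤ → ℝ)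
    (hV : ∀ m k : ℤ, det3 (n m k) (n (m + 1) k) (n m (k + 1)) ≠ 0)
    (hLel : ∀ m k : ℤ,
      r m (k + 1) - r m k
        = n m k ⨯₃ (a (m - 1) k • n (m - 1) k + s (m - 1) k • n (m - 1) (k + 1)) ∧
      r (m + 1) k - r m k
        = -(n m k ⨯₃ (b m (k - 1) • n m (k - 1) + s m (k - 1) • n (m + 1) (k - 1)))) :
    ∃ f : ℤ → ℤ → ℝ, ∀ m k : ℤ,
      a m k • n (m + 1) k + a (m - 1) k • n (m - 1) k
        + b m k • n m (k + 1) + b m (k - 1) • n m (k - 1)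
        + s (m - 1) k • n (m - 1) (k + 1) + s m (k - 1) • n (m + 1) (k - 1)
      = f m k • n m k := by
  choose f hf using fun m k ↦ exists_smul_eq_of_cross_eq_zero (ne_zero_of_det3_ne_zero (hV m k))
    (cross_sevenPointSum_eq_zero r n a b s hLel m k)
  exact ⟨f, hf⟩
end

section
/- Let r, n : ℤ² → ℝ³ and a, b, s : ℤ² → ℝ satisfy the discrete Lelieuvre relations Δ_n r(m,n) = n(m,n) × ( a(m−1,n)·n(m−1,n) + s(m−1,n)·n(m−1,n+1) ) and Δ_m r(m,n) = −n(m,n) × ( b(m,n−1)·n(m,n−1) + s(m,n−1)·n(m+1,n−1) ) for all (m,n). Then for all (m,n), with V(m,n) = det(n(m,n), n(m+1,n), n(m,n+1)): Δ_m r(m,n+1) × Δ_n r(m+1,n) = V(m,n)·( a(m,n)b(m,n)·n(m,n) + a(m,n)s(m,n)·n(m+1,n) + b(m,n)s(m,n)·n(m,n+1) ). In particular, if V(m,n) ≠ 0, the upper triangle at (m,n) is nondegenerate (Δ_m r(m,n+1) × Δ_n r(m+1,n) ≠ 0) if and only if at least one of the products a(m,n)b(m,n), a(m,n)s(m,n),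 b(m,n)s(m,n) is nonzero. -/
/-!
Both edges of the upper triangle are cross products: by the Lelieuvre relations,
`Δ_m r(m,k+1) = -(n(m,k+1) × (b n(m,k) + s n(m+1,k)))` and
`Δ_n r(m+1,k) = n(m+1,k) × (a n(m,k) + s n(m,k+1))`. Expanding their cross product with
`u × (v × w) = (u·w) v - (u·v) w` leaves only triple products of the three normals, all equal
to `±V(m,k)`. When `V(m,k) ≠ 0` the three normals are linearly independent, so the resulting
combination vanishes exactly when all three coefficients do.
-/

open Matrix

theorem det3_eq_triple_product (u v w : Fin 3 → ℝ) : det3 u v w = u ⬝ᵥ v ⨯₃ w :=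
  (triple_product_eq_det u v w).symm

theorem neg_cross_cross_cross_eq_triple_product_smul {R : Type*} [CommRing R]
    (x y z : Fin 3 → R) (a b s : R) :
    -(z ⨯₃ (b • x + s • y)) ⨯₃ (y ⨯₃ (a • x + s • z))
      = (x ⬝ᵥ y ⨯₃ z) • ((a * b) • x + (a * s) • y + (b * s) • z) := by
  have hxzx : x ⨯₃ z ⬝ᵥ x = 0 := by rw [dotProduct_comm, dot_self_cross]
  have hxzz : x ⨯₃ z ⬝ᵥ z = 0 := by rw [dotProduct_comm, dot_cross_self]
  have hyzz : y ⨯₃ z ⬝ᵥ z = 0 := by rw [dotProduct_comm, dot_cross_self]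
  have hyzx : y ⨯₃ z ⬝ᵥ x = x ⬝ᵥ y ⨯₃ z := dotProduct_comm _ _
  have hyxz : y ⬝ᵥ x ⨯₃ z = -(x ⬝ᵥ y ⨯₃ z) := by
    rw [triple_product_permutation, ← cross_anticomm, dotProduct_neg]
  rw [cross_anticomm, cross_cross_eq_smul_sub_smul']
  simp only [map_add, map_smul, LinearMap.add_apply, LinearMap.smul_apply, add_dotProduct,
    dotProduct_add, smul_dotProduct, dotProduct_smul, dot_self_cross, hxzx, hxzz, hyzz, hyzx, hyxz]
  module

theorem smul_add_smul_add_smul_eq_zero_iff {R : Type*} [CommRing R] [IsDomain R]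
    {u v w : Fin 3 → R} (h : u ⬝ᵥ v ⨯₃ w ≠ 0) {c₁ c₂ c₃ : R} :
    c₁ • u + c₂ • v + c₃ • w = 0 ↔ c₁ = 0 ∧ c₂ = 0 ∧ c₃ = 0 := by
  rw [triple_product_eq_det] at h
  refine ⟨fun hc => ?_, fun ⟨h₁, h₂, h₃⟩ => by simp [h₁, h₂, h₃]⟩
  have hli := Fintype.linearIndependent_iff.1
    (linearIndependent_rows_of_det_ne_zero (A := of ![u, v, w]) h) ![c₁, c₂, c₃]
    (by rw [Fin.sum_univ_three]; exact hc)
  exact ⟨hli 0, hli 1, hli 2⟩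

/-- Under the discrete Lelieuvre relations, the upper triangle cross product is
`Δ_m r(m,k+1) × Δ_n r(m+1,k) = V(m,k)·(ab·n(m,k) + as·n(m+1,k) + bs·n(m,k+1))`;
in particular, if `V(m,k) ≠ 0`, the upper triangle at `(m,k)` is nondegenerate iff
at least one of the products `ab`, `as`, `bs` is nonzero. -/
theorem upper_triangle_cross_product
    (r n : ℤ → ℤ → (Fin 3 → ℝ)) (a b s : ℤ → ℤ → ℝ)
    (hLel : ∀ m k : ℤ,
      r m (k + 1) - r m k
        = n m k ⨯₃ (a (m - 1) k • n (m - 1) k + s (m - 1) k • n (m - 1) (k + 1)) ∧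
      r (m + 1) k - r m k
        = -(n m k ⨯₃ (b m (k - 1) • n m (k - 1) + s m (k - 1) • n (m + 1) (k - 1)))) :
    ∀ m k : ℤ,
      ((r (m + 1) (k + 1) - r m (k + 1)) ⨯₃ (r (m + 1) (k + 1) - r (m + 1) k)
        = det3 (n m k) (n (m + 1) k) (n m (k + 1)) •
            ((a m k * b m k) • n m k + (a m k * s m k) • n (m + 1) k
              + (b m k * s m k) • n m (k + 1))) ∧
      (det3 (n m k) (n (m + 1) k) (n m (k + 1)) ≠ 0 →
        ((r (m + 1) (k + 1) - r m (k + 1)) ⨯₃ (r (m + 1) (k + 1) - r (m + 1) k) ≠ 0 ↔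
          (a m k * b m k ≠ 0 ∨ a m k * s m k ≠ 0 ∨ b m k * s m k ≠ 0))) := by
  intro m k
  have hΔm := (hLel m (k + 1)).2
  have hΔn := (hLel (m + 1) k).1
  rw [add_sub_cancel_right] at hΔm hΔn
  rw [hΔm, hΔn, det3_eq_triple_product, neg_cross_cross_cross_eq_triple_product_smul]
  refine ⟨rfl, fun hV => ?_⟩
  rw [smul_ne_zero_iff, and_iff_right hV, ne_eq, smul_add_smul_add_smul_eq_zero_iff hV,
    not_and_or, not_and_or]
end
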